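/- Let p be a prime, n ≥ 1, r ≥ 0, and x = (x_0,…,x_{n−1}) ∈ 𝔽_p^n. Let nummax^{(r)}(x) ∈ 𝔽_p be the r-th base-p digit of the number of indices i with x_i = max(x). Then nummax^{(r)}(x) = Σ_{k=1}^{n} k^{(r)} · Σ_{I ⊆ {0,…,n−1}, |I| = k} Σ_{t=0}^{p−1} ( Π_{i ∈ I} δ_t(x_i) · Π_{j ∉ I} L_t(x_j) ) in 𝔽_p, where δ_t(z) = 1 − (z − t)^{p−1}, L_t(z) = Σ_{m=0}^{t−1} ( 1 − (z − m)^{p−1} ), and k^{(r)} ∈ {0,…,p−1} ⊆ 𝔽_p is the r-th digit of the base-p expansion of the integer k. -/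

import Mathlib

/-!
By Fermat's little theorem `deltaP p t z` is the indicator of `z = t` and, for `t ≤ p`, `Lp p t z`
is the indicator of `z.val < t`. Hence the summand indexed by a nonempty `I` and a level `t` is `1`
exactly when `I` is the set of entries equal to `t` and all other entries lie below `t`, that is,
when `t` is the maximum and `I` is the set of maximisers. Summing over `t` and over `I` of size `k`
leaves the indicator of `k` being the number of maximisers, and the outer sum picks out its `r`-th digit.
-/

/-- The maximum of the components of `x`, where elements of `ZMod p` are
compared via their canonical natural-number representatives. -/
def fmax {p n : ℕ} (x : Fin n → ZMod p) : ZMod p :=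
  ((Finset.univ.sup fun i => (x i).val : ℕ) : ZMod p)

/-- The least index `i` with `x i = fmax x`, as a natural number. -/
noncomputable def argmaxN {p n : ℕ} (x : Fin n → ZMod p) : ℕ :=
  sInf {i : ℕ | ∃ h : i < n, x ⟨i, h⟩ = fmax x}

/-- The `r`-th digit of the base-`p` expansion of `k`, as an element of `ZMod p`. -/
def digitP (p k r : ℕ) : ZMod p := (((k / p ^ r) % p : ℕ) : ZMod p)

/-- Polynomial expression of the low-pass function `χ(z < t)`. -/
def Lp (p t : ℕ) (z : ZMod p) : ZMod p :=
  ∑ k ∈ Finset.range t, (1 - (z - (k : ZMod p)) ^ (p - 1))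

/-- Polynomial expression of the Kronecker delta `χ(z = t)`. -/
def deltaP (p t : ℕ) (z : ZMod p) : ZMod p := 1 - (z - (t : ZMod p)) ^ (p - 1)

open Finset

theorem forall_eq_and_forall_compl_lt_iff {ι : Type*} [Fintype ι] [DecidableEq ι] (v : ι → ℕ)
    {I : Finset ι} (hI : I.Nonempty) (t : ℕ) :
    ((∀ i ∈ I, v i = t) ∧ ∀ j ∈ Iᶜ, v j < t) ↔
      I = univ.filter (fun i => v i = univ.sup v) ∧ t = univ.sup v := by
  constructor
  · rintro ⟨h_eq, h_lt⟩
    have h_sup : t = univ.sup v := by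
      obtain ⟨i₀, hi₀⟩ := hI
      refine le_antisymm (h_eq i₀ hi₀ ▸ le_sup (mem_univ i₀)) (Finset.sup_le fun i _ => ?_)
      by_cases hi : i ∈ I
      · exact (h_eq i hi).le
      · exact (h_lt i (mem_compl.mpr hi)).le
    refine ⟨ext fun i => ?_, h_sup⟩
    rw [mem_filter, ← h_sup]
    refine ⟨fun hi => ⟨mem_univ i, h_eq i hi⟩, fun ⟨_, hi⟩ => ?_⟩
    by_contra h_notin
    exact (h_lt i (mem_compl.mpr h_notin)).ne hi
  · rintro ⟨rfl, rfl⟩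
    refine ⟨fun i hi => (mem_filter.mp hi).2, fun j hj => ?_⟩
    have h_ne : v j ≠ univ.sup v := fun h => mem_compl.mp hj (mem_filter.mpr ⟨mem_univ j, h⟩)
    exact lt_of_le_of_ne (le_sup (mem_univ j)) h_ne

section Indicators

variable {p : ℕ}

theorem ZMod.eq_natCast_iff_val_eq [NeZero p] {t : ℕ} (ht : t < p) (z : ZMod p) :
    z = t ↔ z.val = t := by
  rw [← (ZMod.val_injective p).eq_iff, ZMod.val_cast_of_lt ht]

theorem ZMod.sup_val_lt [NeZero p] {ι : Type*} [Fintype ι] (x : ι → ZMod p) :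
    (univ.sup fun i => (x i).val) < p :=
  (Finset.sup_lt_iff (NeZero.pos p)).mpr fun i _ => ZMod.val_lt (x i)

theorem eq_fmax_iff [NeZero p] {n : ℕ} (x : Fin n → ZMod p) (i : Fin n) :
    x i = fmax x ↔ (x i).val = univ.sup fun j => (x j).val :=
  ZMod.eq_natCast_iff_val_eq (ZMod.sup_val_lt x) (x i)

variable [Fact p.Prime]

theorem deltaP_eq_ite (t : ℕ) (z : ZMod p) : deltaP p t z = if z = t then 1 else 0 := by
  unfold deltaP
  split_ifs with h
  · rw [h, sub_self, zero_pow (Nat.sub_ne_zero_of_lt (Fact.out : p.Prime).one_lt), sub_zero]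
  · rw [ZMod.pow_card_sub_one_eq_one (sub_ne_zero.mpr h), sub_self]

theorem Lp_eq_ite {t : ℕ} (ht : t ≤ p) (z : ZMod p) : Lp p t z = if z.val < t then 1 else 0 := by
  have h_summand : ∀ m ∈ range t, 1 - (z - (m : ZMod p)) ^ (p - 1) = if m = z.val then 1 else 0 :=
    fun m hm => by
      rw [← deltaP, deltaP_eq_ite]
      simp only [ZMod.eq_natCast_iff_val_eq ((mem_range.mp hm).trans_le ht), eq_comm]
  simp only [Lp, sum_congr rfl h_summand, sum_ite_eq', mem_range]

theorem prod_deltaP_mul_prod_Lp {ι : Type*} [Fintype ι] [DecidableEq ι] (x : ι → ZMod p)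
    (I : Finset ι) {t : ℕ} (ht : t < p) :
    (∏ i ∈ I, deltaP p t (x i)) * ∏ j ∈ Iᶜ, Lp p t (x j) =
      if (∀ i ∈ I, (x i).val = t) ∧ ∀ j ∈ Iᶜ, (x j).val < t then 1 else 0 := by
  simp only [deltaP_eq_ite, Lp_eq_ite ht.le, ZMod.eq_natCast_iff_val_eq ht, prod_boole, ite_and,
    ite_mul, one_mul, zero_mul]
  congr

end Indicators

section Nummax

variable {p n : ℕ} [Fact p.Prime]

theorem sum_range_prod_deltaP_mul_prod_Lp (x : Fin n → ZMod p) {I : Finset (Fin n)}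
    (hI : I.Nonempty) :
    ∑ t ∈ range p, (∏ i ∈ I, deltaP p t (x i)) * ∏ j ∈ Iᶜ, Lp p t (x j) =
      if I = univ.filter (fun i => x i = fmax x) then 1 else 0 := by
  set v : Fin n → ℕ := fun i => (x i).val
  have h_summand : ∀ t ∈ range p, (∏ i ∈ I, deltaP p t (x i)) * ∏ j ∈ Iᶜ, Lp p t (x j) =
      if I = univ.filter (fun i => x i = fmax x) then (if univ.sup v = t then 1 else 0) else 0 :=
    fun t ht => by
      simp only [prod_deltaP_mul_prod_Lp x I (mem_range.mp ht),
        forall_eq_and_forall_compl_lt_iff v hI t, ite_and, eq_comm (a := t), v, eq_fmax_iff]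
  rw [sum_congr rfl h_summand]
  split_ifs
  · rw [sum_ite_eq, if_pos (mem_range.mpr (ZMod.sup_val_lt x))]
  · exact sum_const_zero

theorem sum_powersetCard_sum_range_prod_deltaP_mul_prod_Lp (x : Fin n → ZMod p) {k : ℕ}
    (hk : 1 ≤ k) :
    ∑ I ∈ powersetCard k (univ : Finset (Fin n)),
        ∑ t ∈ range p, (∏ i ∈ I, deltaP p t (x i)) * ∏ j ∈ Iᶜ, Lp p t (x j) =
      if (univ.filter fun i => x i = fmax x).card = k then 1 else 0 := by
  have h_summand : ∀ I ∈ powersetCard k (univ : Finset (Fin n)),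
      ∑ t ∈ range p, (∏ i ∈ I, deltaP p t (x i)) * ∏ j ∈ Iᶜ, Lp p t (x j) =
        if univ.filter (fun i => x i = fmax x) = I then 1 else 0 := fun I hI => by
    simp only [sum_range_prod_deltaP_mul_prod_Lp x (card_pos.mp ((mem_powersetCard.mp hI).2 ▸ hk)),
      eq_comm]
  rw [sum_congr rfl h_summand, sum_ite_eq]
  simp [mem_powersetCard]

end Nummax

theorem nummax_digit_formula_general (p n r : ℕ) (hp : p.Prime)
    (x : Fin n → ZMod p) :
    digitP p ((Finset.univ.filter fun i => x i = fmax x).card) r =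
      ∑ k ∈ Finset.Icc 1 n, digitP p k r *
        ∑ I ∈ Finset.powersetCard k (Finset.univ : Finset (Fin n)),
          ∑ t ∈ Finset.range p,
            ((∏ i ∈ I, deltaP p t (x i)) * ∏ j ∈ Iᶜ, Lp p t (x j)) := by
  have : Fact p.Prime := ⟨hp⟩
  set m := (univ.filter fun i => x i = fmax x).card
  rw [sum_congr rfl fun k hk => by
      rw [sum_powersetCard_sum_range_prod_deltaP_mul_prod_Lp x (mem_Icc.mp hk).1, mul_ite,
        mul_one, mul_zero, eq_comm],
    sum_ite_eq]
  split_ifs with hm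
  · rfl
  · have h_zero : m = 0 := by
      have : m ≤ n := (card_filter_le _ _).trans_eq (card_fin n)
      simp only [mem_Icc, not_and_or, not_le] at hm
      omega
    simp [h_zero, digitP]

theorem nummax_digit_formula (p n r : ℕ) (hp : p.Prime) (hn : 1 ≤ n)
    (x : Fin n → ZMod p) :
    digitP p ((Finset.univ.filter fun i => x i = fmax x).card) r =
      ∑ k ∈ Finset.Icc 1 n, digitP p k r *
        ∑ I ∈ Finset.powersetCard k (Finset.univ : Finset (Fin n)),
          ∑ t ∈ Finset.range p,
            ((∏ i ∈ I, deltaP p t (x i)) * ∏ j ∈ Iᶜ, Lp p t (x j)) :=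
  nummax_digit_formula_general p n r hp x
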